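/- For every n ≥ 1 and every ε ∈ (0,½) there exists c ∈ (0,1) such that for every c-pinched n×n complex Hermitian matrix W and every n×n complex Hermitian matrix V, the (real) quantity Q(W,V) := det W·((1 + log det W)·(tr(W⁻¹V))² − log det W · tr(W⁻¹·V·W⁻¹·V)) satisfies Q(W,V) ≥ (½ − ε)·(tr V)² − ε·‖V‖_F². (This is the pointwise coercivity estimate at the heart of Proposition 3.2 of the paper.) -/

import Mathlib

open scoped ComplexOrder

/-- A matrix `W` is `c`-pinched if it is Hermitian and `(1−c)·1 ≤ W ≤ (1+c)·1` in the
sense of the positive-semidefinite order. -/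
def IsPinched {n : ℕ} (c : ℝ) (W : Matrix (Fin n) (Fin n) ℂ) : Prop :=
  W.IsHermitian ∧ (W - ((1 - c : ℝ) : ℂ) • 1).PosSemidef ∧
    (((1 + c : ℝ) : ℂ) • 1 - W).PosSemidef

/-- Squared Frobenius norm `‖V‖_F² = ∑_{j,k} |V_{jk}|²` of a complex matrix. -/
noncomputable def frobSq {n : ℕ} (V : Matrix (Fin n) (Fin n) ℂ) : ℝ :=
  ∑ j, ∑ k, Complex.normSq (V j k)

/-- The (real) quantity
`Q(W,V) = det W·((1 + log det W)·(tr(W⁻¹V))² − log det W · tr(W⁻¹·V·W⁻¹·V))`;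
for `c`-pinched `W` and Hermitian `V` all constituents are real, so we take real parts. -/
noncomputable def Qcoer {n : ℕ} (W V : Matrix (Fin n) (Fin n) ℂ) : ℝ :=
  W.det.re * ((1 + Real.log W.det.re) * ((W⁻¹ * V).trace.re) ^ 2
    - Real.log W.det.re * ((W⁻¹ * V * W⁻¹ * V).trace.re))

/-!
Diagonalise `W = U diag(μ) U*` and write `A = U* V U`, `a i = Re A i i`, `r i j = |A i j|²`.
Then `det W = ∏ μ i`, `tr(W⁻¹V) = ∑ a i / μ i`, `tr(W⁻¹VW⁻¹V) = ∑ r i j / (μ i μ j)`,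
`tr V = ∑ a i` and `‖V‖_F² = ∑ r i j`, so the claim becomes an inequality between real numbers.
If every `μ i` lies within `c = ε² / (64 (n + 1))` of `1`, then `|log det W| ≤ ε² / 32`,
`tr(W⁻¹V)` is within `O(ε²) ‖V‖_F` of `tr V` (Cauchy–Schwarz), and `tr(W⁻¹VW⁻¹V) ≤ 4 ‖V‖_F²`.
Hence `Q(W, V) ≥ (1 - O(ε²)) (tr W⁻¹V)² - O(ε²) ‖V‖_F²`, and splitting
`(tr W⁻¹V)² ≥ (1 - ε) (tr V)² - ε⁻¹ (tr W⁻¹V - tr V)²` gives the bound with room to spare.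
-/

open Finset Set Real Matrix Unitary

section Scalar

variable {c x : ℝ}

lemma abs_inv_sub_one_le_of_mem_Icc (hc : c ≤ 1 / 2) (hx : x ∈ Icc (1 - c) (1 + c)) :
    |x⁻¹ - 1| ≤ 2 * c := by
  obtain ⟨hlo, hhi⟩ := hx
  have hx0 : 0 < x := by linarith
  rw [abs_le, ← one_div, le_sub_iff_add_le, sub_le_iff_le_add, le_div_iff₀ hx0,
    div_le_iff₀ hx0]
  constructor <;> nlinarith

lemma abs_log_le_of_mem_Icc (hc : c ≤ 1 / 2) (hx : x ∈ Icc (1 - c) (1 + c)) :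
    |log x| ≤ 2 * c := by
  have hx0 : 0 < x := by linarith [hx.1]
  have hinv := abs_le.mp (abs_inv_sub_one_le_of_mem_Icc hc hx)
  rw [abs_le]
  constructor
  · linarith [one_sub_inv_le_log_of_pos hx0]
  · linarith [log_le_sub_one_of_pos hx0, hx.1, hx.2]

variable {ι : Type*} [Fintype ι] {μ : ι → ℝ}

lemma abs_log_prod_le (hc : c ≤ 1 / 2) (hμ : ∀ i, μ i ∈ Icc (1 - c) (1 + c)) :
    |log (∏ i, μ i)| ≤ Fintype.card ι * (2 * c) := by
  rw [log_prod fun i _ ↦ by linarith [(hμ i).1]]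
  calc |∑ i, log (μ i)| ≤ ∑ i, |log (μ i)| := abs_sum_le_sum_abs _ _
    _ ≤ ∑ _i : ι, 2 * c := sum_le_sum fun i _ ↦ abs_log_le_of_mem_Icc hc (hμ i)
    _ = Fintype.card ι * (2 * c) := by simp

lemma sq_sum_inv_mul_sub_sum_le (hc : c ≤ 1 / 2) (hμ : ∀ i, μ i ∈ Icc (1 - c) (1 + c))
    (a : ι → ℝ) :
    (∑ i, (μ i)⁻¹ * a i - ∑ i, a i) ^ 2 ≤ Fintype.card ι * (2 * c) ^ 2 * ∑ i, a i ^ 2 := by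
  calc (∑ i, (μ i)⁻¹ * a i - ∑ i, a i) ^ 2 = (∑ i, ((μ i)⁻¹ - 1) * a i) ^ 2 := by
        simp only [← sum_sub_distrib, sub_one_mul]
    _ ≤ (∑ i, ((μ i)⁻¹ - 1) ^ 2) * ∑ i, a i ^ 2 := sum_mul_sq_le_sq_mul_sq _ _ _
    _ ≤ (∑ _i : ι, (2 * c) ^ 2) * ∑ i, a i ^ 2 := by
        refine mul_le_mul_of_nonneg_right (sum_le_sum fun i _ ↦ ?_) (by positivity)
        exact sq_le_sq.mpr ((abs_inv_sub_one_le_of_mem_Icc hc (hμ i)).trans (le_abs_self _))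
    _ = Fintype.card ι * (2 * c) ^ 2 * ∑ i, a i ^ 2 := by simp

lemma sum_sum_inv_mul_inv_mul_le (hc : c ≤ 1 / 2) (hμ : ∀ i, μ i ∈ Icc (1 - c) (1 + c))
    {r : ι → ι → ℝ} (hr : ∀ i j, 0 ≤ r i j) :
    ∑ i, ∑ j, (μ i)⁻¹ * (μ j)⁻¹ * r i j ≤ 4 * ∑ i, ∑ j, r i j := by
  have hinv i : 0 ≤ (μ i)⁻¹ ∧ (μ i)⁻¹ ≤ 2 := by
    have := abs_le.mp (abs_inv_sub_one_le_of_mem_Icc hc (hμ i))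
    exact ⟨inv_nonneg.mpr (by linarith [(hμ i).1]), by linarith⟩
  simp only [mul_sum]
  gcongr with i _ j _
  · exact hr i j
  · nlinarith [hinv i, hinv j]

end Scalar

lemma coercivity_of_bounds {ε δ L T t S F : ℝ} (hε0 : 0 < ε) (hε1 : ε < 1 / 2) (hδ0 : 0 ≤ δ)
    (hδ : δ ≤ ε ^ 2 / 64) (hL : |L| ≤ 2 * δ) (hS0 : 0 ≤ S) (hS : S ≤ 4 * F)
    (hT : (T - t) ^ 2 ≤ 4 * δ ^ 2 * F) :
    (1 / 2 - ε) * t ^ 2 - ε * F ≤ exp L * ((1 + L) * T ^ 2 - L * S) := by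
  obtain ⟨hL1, hL2⟩ := abs_le.mp hL
  have hδ1 : δ ≤ 1 / 256 := by nlinarith
  have hexp_lo : 1 - 2 * δ ≤ exp L := by linarith [add_one_le_exp L]
  have hexp_hi : exp L ≤ 2 :=
    calc exp L ≤ exp (2 * δ) := exp_le_exp.mpr hL2
      _ ≤ 1 / (1 - 2 * δ) := exp_bound_div_one_sub_of_interval (by positivity) (by linarith)
      _ ≤ 2 := by rw [div_le_iff₀ (by linarith)]; linarith
  have hmain : 1 - 4 * δ ≤ exp L * (1 + L) := by nlinarith
  have hcross : exp L * L * S ≤ 16 * δ * F :=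
    calc exp L * L * S ≤ exp L * |L| * S := by gcongr; exact le_abs_self L
      _ ≤ 2 * (2 * δ) * (4 * F) := by gcongr
      _ = 16 * δ * F := by ring
  -- `ε T² - ε (1 - ε) t² + (T - t)² = (ε t + (T - t))² + ε (T - t)²`
  have hTt : ε * (1 - ε) * t ^ 2 - 4 * δ ^ 2 * F ≤ ε * T ^ 2 := by
    nlinarith [sq_nonneg (ε * t + (T - t)), mul_nonneg hε0.le (sq_nonneg (T - t))]
  have hF : 0 ≤ F := by linarith
  suffices ε * ((1 / 2 - ε) * t ^ 2 - ε * F) ≤ ε * (exp L * (1 + L) * T ^ 2 - exp L * L * S) by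
    have := le_of_mul_le_mul_left this hε0
    linarith
  have hlead : (1 - 4 * δ) * (ε * T ^ 2) ≤ exp L * (1 + L) * (ε * T ^ 2) :=
    mul_le_mul_of_nonneg_right hmain (by positivity)
  have hlead' : (1 - 4 * δ) * (ε * (1 - ε) * t ^ 2 - 4 * δ ^ 2 * F) ≤ (1 - 4 * δ) * (ε * T ^ 2) :=
    mul_le_mul_of_nonneg_left hTt (by linarith)
  have hcross' : ε * (exp L * L * S) ≤ ε * (16 * δ * F) := mul_le_mul_of_nonneg_left hcross hε0.le
  have ht_coef : 0 ≤ ε * t ^ 2 * (1 / 2 - 4 * δ * (1 - ε)) := by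
    have : 0 ≤ 1 / 2 - 4 * δ * (1 - ε) := by nlinarith
    positivity
  have hF_coef : (4 * δ ^ 2 + 16 * ε * δ) * F ≤ ε ^ 2 * F :=
    mul_le_mul_of_nonneg_right (by nlinarith) hF
  have : 0 ≤ δ * (4 * δ ^ 2 * F) := by positivity
  linarith

theorem coercivity_of_mem_Icc {ι : Type*} [Fintype ι] {ε c : ℝ} (hε0 : 0 < ε)
    (hε1 : ε < 1 / 2) (hc0 : 0 ≤ c) (hc : (Fintype.card ι + 1) * c ≤ ε ^ 2 / 64)
    {μ : ι → ℝ} (hμ : ∀ i, μ i ∈ Icc (1 - c) (1 + c)) {a : ι → ℝ} {r : ι → ι → ℝ}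
    (hr : ∀ i j, 0 ≤ r i j) (ha : ∀ i, a i ^ 2 ≤ r i i) :
    (1 / 2 - ε) * (∑ i, a i) ^ 2 - ε * ∑ i, ∑ j, r i j ≤
      (∏ i, μ i) * ((1 + log (∏ i, μ i)) * (∑ i, (μ i)⁻¹ * a i) ^ 2
        - log (∏ i, μ i) * ∑ i, ∑ j, (μ i)⁻¹ * (μ j)⁻¹ * r i j) := by
  have hc_le : c ≤ ε ^ 2 / 64 := by nlinarith
  have hnc_le : Fintype.card ι * c ≤ ε ^ 2 / 64 := by linarith
  have hc2 : c ≤ 1 / 2 := by nlinarith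
  have hμ0 i : 0 < μ i := by linarith [(hμ i).1]
  have ha_le : ∑ i, a i ^ 2 ≤ ∑ i, ∑ j, r i j :=
    sum_le_sum fun i _ ↦ (ha i).trans (single_le_sum (fun j _ ↦ hr i j) (mem_univ i))
  have hlog : |log (∏ i, μ i)| ≤ 2 * (ε ^ 2 / 64) := by
    linarith [abs_log_prod_le hc2 hμ]
  have hS0 : 0 ≤ ∑ i, ∑ j, (μ i)⁻¹ * (μ j)⁻¹ * r i j :=
    sum_nonneg fun i _ ↦ sum_nonneg fun j _ ↦
      mul_nonneg (mul_nonneg (inv_nonneg.mpr (hμ0 i).le) (inv_nonneg.mpr (hμ0 j).le)) (hr i j)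
  have hT : (∑ i, (μ i)⁻¹ * a i - ∑ i, a i) ^ 2 ≤ 4 * (ε ^ 2 / 64) ^ 2 * ∑ i, ∑ j, r i j :=
    calc _ ≤ Fintype.card ι * (2 * c) ^ 2 * ∑ i, a i ^ 2 := sq_sum_inv_mul_sub_sum_le hc2 hμ a
      _ ≤ 4 * (ε ^ 2 / 64) ^ 2 * ∑ i, ∑ j, r i j := by
        have : Fintype.card ι * c * c ≤ ε ^ 2 / 64 * (ε ^ 2 / 64) :=
          mul_le_mul hnc_le hc_le hc0 (by positivity)
        have : 0 ≤ ∑ i, a i ^ 2 := by positivity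
        nlinarith
  calc _ ≤ exp (log (∏ i, μ i)) * _ := coercivity_of_bounds hε0 hε1 (by positivity) le_rfl hlog
        hS0 (sum_sum_inv_mul_inv_mul_le hc2 hμ hr) hT
    _ = _ := by rw [exp_log (prod_pos fun i _ ↦ hμ0 i)]

namespace Matrix

variable {ι 𝕜 : Type*} [Fintype ι] [DecidableEq ι] [RCLike 𝕜]

lemma IsHermitian.re_dotProduct_sub_smul_one_mulVec_eigenvectorBasis {W : Matrix ι ι 𝕜}
    (hW : W.IsHermitian) (a : ℝ) (i : ι) :
    RCLike.re (star ⇑(hW.eigenvectorBasis i) ⬝ᵥ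
      ((W - (a : 𝕜) • 1) *ᵥ ⇑(hW.eigenvectorBasis i))) = hW.eigenvalues i - a := by
  have hnorm : star ⇑(hW.eigenvectorBasis i) ⬝ᵥ ⇑(hW.eigenvectorBasis i) = 1 := by
    rw [dotProduct_comm, ← EuclideanSpace.inner_eq_star_dotProduct, inner_self_eq_norm_sq_to_K,
      hW.eigenvectorBasis.orthonormal.1 i]
    simp
  rw [sub_mulVec, smul_mulVec, one_mulVec, dotProduct_sub, dotProduct_smul, hnorm, map_sub,
    ← hW.eigenvalues_eq]
  simp

lemma IsHermitian.le_eigenvalues_of_posSemidef_sub {W : Matrix ι ι 𝕜} (hW : W.IsHermitian) {a : ℝ}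
    (h : (W - (a : 𝕜) • 1).PosSemidef) (i : ι) : a ≤ hW.eigenvalues i := by
  have := h.re_dotProduct_nonneg (hW.eigenvectorBasis i)
  rw [hW.re_dotProduct_sub_smul_one_mulVec_eigenvectorBasis] at this
  linarith

lemma IsHermitian.eigenvalues_le_of_posSemidef_sub {W : Matrix ι ι 𝕜} (hW : W.IsHermitian) {a : ℝ}
    (h : ((a : 𝕜) • 1 - W).PosSemidef) (i : ι) : hW.eigenvalues i ≤ a := by
  have := h.re_dotProduct_nonneg (hW.eigenvectorBasis i)
  rw [← neg_sub, neg_mulVec, dotProduct_neg, map_neg,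
    hW.re_dotProduct_sub_smul_one_mulVec_eigenvectorBasis] at this
  linarith

lemma trace_conjStarAlgAut (U : unitaryGroup ι 𝕜) (X : Matrix ι ι 𝕜) :
    (conjStarAlgAut 𝕜 _ U X).trace = X.trace := by
  rw [conjStarAlgAut_apply, trace_mul_cycle, coe_star_mul_self, one_mul]

section Eigenbasis

variable {W : Matrix ι ι 𝕜} (hW : W.IsHermitian)

noncomputable def IsHermitian.inEigenbasis (V : Matrix ι ι 𝕜) : Matrix ι ι 𝕜 :=
  (conjStarAlgAut 𝕜 _ hW.eigenvectorUnitary).symm V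

lemma IsHermitian.isHermitian_inEigenbasis {V : Matrix ι ι 𝕜} (hV : V.IsHermitian) :
    (hW.inEigenbasis V).IsHermitian := by
  simpa [inEigenbasis, conjStarAlgAut_symm_apply, star_eq_conjTranspose]
    using isHermitian_conjTranspose_mul_mul (hW.eigenvectorUnitary : Matrix ι ι 𝕜) hV

lemma IsHermitian.trace_inEigenbasis (V : Matrix ι ι 𝕜) :
    (hW.inEigenbasis V).trace = V.trace := by
  conv_rhs => rw [← (conjStarAlgAut 𝕜 _ hW.eigenvectorUnitary).apply_symm_apply V]
  rw [trace_conjStarAlgAut, inEigenbasis]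

lemma IsHermitian.inv_mul_eq_conjStarAlgAut (h : ∀ i, hW.eigenvalues i ≠ 0) (V : Matrix ι ι 𝕜) :
    W⁻¹ * V = conjStarAlgAut 𝕜 _ hW.eigenvectorUnitary
      (diagonal (RCLike.ofReal ∘ hW.eigenvalues⁻¹) * hW.inEigenbasis V) := by
  rw [map_mul, inEigenbasis, StarAlgEquiv.apply_symm_apply]
  congr 1
  refine inv_eq_left_inv ?_
  calc _ = conjStarAlgAut 𝕜 _ hW.eigenvectorUnitary (diagonal (RCLike.ofReal ∘ hW.eigenvalues⁻¹))
        * conjStarAlgAut 𝕜 _ hW.eigenvectorUnitary (diagonal (RCLike.ofReal ∘ hW.eigenvalues)) :=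
        congrArg _ hW.spectral_theorem
    _ = 1 := by
      rw [← map_mul, diagonal_mul_diagonal, ← map_one (conjStarAlgAut 𝕜 _ hW.eigenvectorUnitary),
        ← diagonal_one]
      congr 2
      ext i
      simp [h i]

end Eigenbasis

lemma re_trace_diagonal_mul (d : ι → ℝ) (A : Matrix ι ι ℂ) :
    (diagonal (RCLike.ofReal ∘ d) * A).trace.re = ∑ i, d i * (A i i).re := by
  simp [trace, diagonal_mul]

lemma IsHermitian.re_trace_diagonal_mul_sq {A : Matrix ι ι ℂ} (hA : A.IsHermitian) (d : ι → ℝ) :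
    (diagonal (RCLike.ofReal ∘ d) * A * (diagonal (RCLike.ofReal ∘ d) * A)).trace.re =
      ∑ i, ∑ j, d i * d j * Complex.normSq (A i j) := by
  simp only [trace, diag, mul_apply, diagonal_apply, ite_mul, zero_mul, sum_ite_eq,
    Complex.re_sum]
  refine sum_congr rfl fun i _ ↦ sum_congr rfl fun j _ ↦ ?_
  rw [← hA.apply i j, Complex.normSq_apply]
  simp [Complex.mul_re]
  ring

end Matrix

lemma IsPinched.eigenvalues_mem_Icc {n : ℕ} {c : ℝ} {W : Matrix (Fin n) (Fin n) ℂ}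
    (h : IsPinched c W) (i : Fin n) : h.1.eigenvalues i ∈ Icc (1 - c) (1 + c) :=
  ⟨h.1.le_eigenvalues_of_posSemidef_sub h.2.1 i, h.1.eigenvalues_le_of_posSemidef_sub h.2.2 i⟩

lemma frobSq_eq_re_trace_mul_self {n : ℕ} {V : Matrix (Fin n) (Fin n) ℂ} (hV : V.IsHermitian) :
    frobSq V = (V * V).trace.re := by
  simpa [frobSq] using (hV.re_trace_diagonal_mul_sq 1).symm

theorem coercivity_of_isPinched {n : ℕ} {ε c : ℝ} (hε0 : 0 < ε) (hε1 : ε < 1 / 2) (hc0 : 0 ≤ c)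
    (hc : (n + 1) * c ≤ ε ^ 2 / 64) {W V : Matrix (Fin n) (Fin n) ℂ} (hW : IsPinched c W)
    (hV : V.IsHermitian) :
    (1 / 2 - ε) * V.trace.re ^ 2 - ε * frobSq V ≤ Qcoer W V := by
  set A := hW.1.inEigenbasis V
  have hA : A.IsHermitian := hW.1.isHermitian_inEigenbasis hV
  have hμ := hW.eigenvalues_mem_Icc
  have hc1 : c < 1 := by nlinarith
  have hμ0 i : hW.1.eigenvalues i ≠ 0 := (show 0 < hW.1.eigenvalues i by linarith [(hμ i).1]).ne'
  have hdet : W.det.re = ∏ i, hW.1.eigenvalues i := by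
    simp [hW.1.det_eq_prod_eigenvalues, ← Complex.ofReal_prod]
  have htr : (W⁻¹ * V).trace.re = ∑ i, (hW.1.eigenvalues i)⁻¹ * (A i i).re := by
    rw [hW.1.inv_mul_eq_conjStarAlgAut hμ0, trace_conjStarAlgAut, re_trace_diagonal_mul]
    rfl
  have htr2 : (W⁻¹ * V * W⁻¹ * V).trace.re = ∑ i, ∑ j,
      (hW.1.eigenvalues i)⁻¹ * (hW.1.eigenvalues j)⁻¹ * Complex.normSq (A i j) := by
    rw [mul_assoc (W⁻¹ * V), hW.1.inv_mul_eq_conjStarAlgAut hμ0, ← map_mul, trace_conjStarAlgAut,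
      hA.re_trace_diagonal_mul_sq]
    rfl
  have htrV : V.trace.re = ∑ i, (A i i).re := by
    rw [← hW.1.trace_inEigenbasis, trace, Complex.re_sum]
    rfl
  have hfrob : frobSq V = frobSq A := by
    rw [frobSq_eq_re_trace_mul_self hV, frobSq_eq_re_trace_mul_self hA,
      ← hW.1.trace_inEigenbasis, IsHermitian.inEigenbasis, map_mul]
    rfl
  rw [Qcoer, hdet, htr, htr2, htrV, hfrob]
  exact coercivity_of_mem_Icc hε0 hε1 hc0 (by simpa using hc) hμ
    (fun i j ↦ Complex.normSq_nonneg _) fun i ↦ by simp [Complex.normSq_apply, sq, mul_self_nonneg]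

theorem pointwise_coercivity_general (n : ℕ) (ε : ℝ) (hε0 : 0 < ε) (hε1 : ε < 1 / 2) :
    ∃ c : ℝ, 0 < c ∧ c < 1 ∧
      ∀ W V : Matrix (Fin n) (Fin n) ℂ, IsPinched c W → V.IsHermitian →
        Qcoer W V ≥ (1 / 2 - ε) * (V.trace.re) ^ 2 - ε * frobSq V := by
  refine ⟨ε ^ 2 / (64 * (n + 1)), by positivity, ?_, fun W V hW hV ↦ ?_⟩
  · rw [div_lt_one (by positivity)]
    nlinarith
  · refine coercivity_of_isPinched hε0 hε1 (by positivity) (le_of_eq ?_) hW hV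
    field_simp

/-- **Pointwise coercivity estimate** (heart of Proposition 3.2): for every `n ≥ 1` and
`ε ∈ (0,½)` there is `c ∈ (0,1)` such that for every `c`-pinched `W` and Hermitian `V`,
`Q(W,V) ≥ (½ − ε)·(tr V)² − ε·‖V‖_F²`. -/
theorem pointwise_coercivity (n : ℕ) (hn : 1 ≤ n) (ε : ℝ) (hε0 : 0 < ε) (hε1 : ε < 1 / 2) :
    ∃ c : ℝ, 0 < c ∧ c < 1 ∧
      ∀ W V : Matrix (Fin n) (Fin n) ℂ, IsPinched c W → V.IsHermitian →
        Qcoer W V ≥ (1 / 2 - ε) * (V.trace.re) ^ 2 - ε * frobSq V :=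
  pointwise_coercivity_general n ε hε0 hε1
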